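/- Let I be a standard dyadic n-partition of [0,1]. Then the number of intervals A ∈ S_R(I) with s(A) = +1 equals one plus the number of breakpoints a of I with 0 < a < 1 whose sign is −1 (the sign of a being s(m^{-1}(a))). -/

import Mathlib

/-- `IsSD l r` means `[l, r]` is a standard dyadic interval
`[k/2^m, (k+1)/2^m] ⊆ [0,1]` with `m ≥ 0`, `0 ≤ k ≤ 2^m - 1`. -/
def IsSD (l r : ℚ) : Prop :=
  ∃ m k : ℕ, k < 2 ^ m ∧ l = (k : ℚ) / 2 ^ m ∧ r = ((k : ℚ) + 1) / 2 ^ m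

/-- A left standard dyadic interval: `[k/2^m, (k+1)/2^m]` with `m ≥ 1` and `k` even. -/
def IsLeftSD (l r : ℚ) : Prop :=
  ∃ m k : ℕ, 1 ≤ m ∧ k < 2 ^ m ∧ Even k ∧
    l = (k : ℚ) / 2 ^ m ∧ r = ((k : ℚ) + 1) / 2 ^ m

/-- A right standard dyadic interval: `[k/2^m, (k+1)/2^m]` with `m ≥ 1` and `k` odd;
by convention `[0,1]` is also regarded as a right standard dyadic interval. -/
def IsRightSD (l r : ℚ) : Prop :=
  (l = 0 ∧ r = 1) ∨
    ∃ m k : ℕ, 1 ≤ m ∧ k < 2 ^ m ∧ Odd k ∧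
      l = (k : ℚ) / 2 ^ m ∧ r = ((k : ℚ) + 1) / 2 ^ m

/-- The set `S` of all standard dyadic intervals, an interval `[l, r]` being
represented by the pair `(l, r)` of its endpoints. -/
def SDSet : Set (ℚ × ℚ) := {A | IsSD A.1 A.2}

/-- The conjugate `Ā` of a standard dyadic interval `A ≠ [0,1]`:
the adjacent standard dyadic interval of the same length, on the right of `A`
if `A` is left, and on the left of `A` if `A` is right. -/
noncomputable def conjSD (A : ℚ × ℚ) : ℚ × ℚ := by
  classical
  exact if IsLeftSD A.1 A.2 then (A.2, 2 * A.2 - A.1) else (2 * A.1 - A.2, A.1)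

/-- The union of two overlapping or adjacent closed intervals, as an interval:
from the smaller left endpoint to the larger right endpoint.  In particular
`sdJoin A (conjSD A)` represents the interval `A ∪ Ā`. -/
def sdJoin (A B : ℚ × ℚ) : ℚ × ℚ := (min A.1 B.1, max A.2 B.2)

/-- A standard dyadic `n`-partition of `[0,1]`: breakpoints
`0 = a_0 < a_1 < ... < a_n = 1` with every `[a_i, a_{i+1}]` a standard dyadic
interval. -/
structure SDPartition (n : ℕ) where
  pts : Fin (n + 1) → ℚ
  first : pts 0 = 0
  last : pts (Fin.last n) = 1
  mono : StrictMono pts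
  sd : ∀ i : Fin n, IsSD (pts i.castSucc) (pts i.succ)

/-- `S(I)`: the set of intervals `[a_i, a_j]` (`i < j`) with endpoints breakpoints
of `I` that are standard dyadic intervals. -/
def SIn {n : ℕ} (I : SDPartition n) : Set (ℚ × ℚ) :=
  {A | (∃ i j : Fin (n + 1), i < j ∧ A = (I.pts i, I.pts j)) ∧ IsSD A.1 A.2}

/-- The midpoint of an interval. -/
def midQ (A : ℚ × ℚ) : ℚ := (A.1 + A.2) / 2

/-- The length of an interval. -/
def lenQ (A : ℚ × ℚ) : ℚ := A.2 - A.1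

/-- `E`: the set of dyadic rationals strictly between 0 and 1. -/
def Edyadic : Set ℚ := {q | ∃ m k : ℕ, 1 ≤ k ∧ k < 2 ^ m ∧ q = (k : ℚ) / 2 ^ m}

/-- `S_L(I) = S(I) ∩ S_L`. -/
def SLIn {n : ℕ} (I : SDPartition n) : Set (ℚ × ℚ) := {A ∈ SIn I | IsLeftSD A.1 A.2}

/-- `S_R(I) = S(I) ∩ S_R`. -/
def SRIn {n : ℕ} (I : SDPartition n) : Set (ℚ × ℚ) := {A ∈ SIn I | IsRightSD A.1 A.2}

/-- `M(I)`: the set of midpoints of the subintervals of `I`. -/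
def MIn {n : ℕ} (I : SDPartition n) : Set ℚ :=
  {q | ∃ i : Fin n, q = midQ (I.pts i.castSucc, I.pts i.succ)}

/-- `E(I)`: the union of `M(I)` with the breakpoints of `I` other than 0 and 1. -/
def EIn {n : ℕ} (I : SDPartition n) : Set ℚ :=
  MIn I ∪ {q | (∃ i : Fin (n + 1), I.pts i = q) ∧ q ≠ 0 ∧ q ≠ 1}

/-- `SignSpec s` says that `s` takes values in `{+1, -1}` on standard dyadic
intervals, `s([0,1]) = +1`, and for `A ≠ [0,1]`, `s A = s (A ∪ Ā)` if `A` is a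
left interval while `s A = - s (A ∪ Ā)` if `A` is a right interval. -/
def SignSpec (s : ℚ × ℚ → ℤ) : Prop :=
  (∀ A ∈ SDSet, s A = 1 ∨ s A = -1) ∧
  s ((0 : ℚ), (1 : ℚ)) = 1 ∧
  ∀ A ∈ SDSet, A ≠ ((0 : ℚ), (1 : ℚ)) →
    (IsLeftSD A.1 A.2 → s A = s (sdJoin A (conjSD A))) ∧
    (IsRightSD A.1 A.2 → s A = - s (sdJoin A (conjSD A)))

/-!
The intervals of `S(I)` form a full binary tree whose leaves are the parts of `I`. Every right
interval other than `[0,1]` is the right half of an s.d. interval `J` (its parent), its left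
endpoint is the midpoint of `J`, and its sign is `-s(J)`. Hence `A ↦ A.1` is a bijection from the
intervals of `S_R(I) \ {[0,1]}` of sign `+1` onto the breakpoints of sign `-1`. Surjectivity rests
on the nesting of s.d. intervals: if a breakpoint `b` is the midpoint of `J`, then the right
endpoint of `J` is a breakpoint too, so the right half of `J` lies in `S(I)`.
-/

lemma odd_mul_two_pow_inj : ∀ {m n a b : ℕ}, (2 * a + 1) * 2 ^ m = (2 * b + 1) * 2 ^ n →
    m = n ∧ a = b
  | 0, 0, _, _, h => by simp at h; omega
  | 0, n + 1, _, _, h => by have := congrArg (· % 2) h; simp [Nat.mul_mod, pow_succ] at this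
  | m + 1, 0, _, _, h => by have := congrArg (· % 2) h; simp [Nat.mul_mod, pow_succ] at this
  | m + 1, n + 1, a, b, h => by
    have := odd_mul_two_pow_inj (m := m) (n := n) (a := a) (b := b)
      (by rw [pow_succ, pow_succ, ← mul_assoc, ← mul_assoc] at h; omega)
    omega

namespace IsSD

variable {l r : ℚ}

lemma lt (h : IsSD l r) : l < r := by
  obtain ⟨m, k, -, rfl, rfl⟩ := h
  gcongr
  linarith

lemma nonneg (h : IsSD l r) : 0 ≤ l := by
  obtain ⟨m, k, -, rfl, rfl⟩ := h
  positivity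

lemma le_one (h : IsSD l r) : r ≤ 1 := by
  obtain ⟨m, k, hk, -, rfl⟩ := h
  rw [div_le_one (by positivity)]
  exact_mod_cast hk

end IsSD

lemma isSD_zero_one : IsSD 0 1 := ⟨0, 0, by norm_num, by norm_num, by norm_num⟩

lemma dyadic_nested_of_le {m u k x : ℕ} (hmu : m ≤ u)
    (h₁ : (x : ℚ) / 2 ^ u < (k + 1) / 2 ^ m) (h₂ : (k : ℚ) / 2 ^ m < (x + 1) / 2 ^ u) :
    (k : ℚ) / 2 ^ m ≤ x / 2 ^ u ∧ ((x : ℚ) + 1) / 2 ^ u ≤ (k + 1) / 2 ^ m := by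
  obtain ⟨d, rfl⟩ := Nat.exists_eq_add_of_le hmu
  have rescale (y : ℚ) : y / 2 ^ m = y * 2 ^ d / 2 ^ (m + d) := by
    rw [pow_add]; field_simp
  rw [rescale, rescale, div_le_div_iff_of_pos_right (by positivity),
    div_le_div_iff_of_pos_right (by positivity)]
  rw [rescale, div_lt_div_iff_of_pos_right (by positivity)] at h₁ h₂
  have h₁' : x < k * 2 ^ d + 2 ^ d := by
    exact_mod_cast (by linarith : (x : ℚ) < k * 2 ^ d + 2 ^ d)
  have h₂' : k * 2 ^ d < x + 1 := by exact_mod_cast h₂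
  constructor
  · exact_mod_cast (by omega : k * 2 ^ d ≤ x)
  · have : x + 1 ≤ k * 2 ^ d + 2 ^ d := by omega
    have : ((x : ℚ) + 1) ≤ k * 2 ^ d + 2 ^ d := by exact_mod_cast this
    linarith

lemma IsSD.nested_of_overlap {p q l r : ℚ} (hP : IsSD p q) (hJ : IsSD l r)
    (h₁ : p < r) (h₂ : l < q) : (l ≤ p ∧ q ≤ r) ∨ (p ≤ l ∧ r ≤ q) := by
  obtain ⟨u, x, -, rfl, rfl⟩ := hP
  obtain ⟨m, k, -, rfl, rfl⟩ := hJ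
  rcases le_total m u with h | h
  · exact Or.inl (dyadic_nested_of_le h h₁ h₂)
  · exact Or.inr (dyadic_nested_of_le h h₂ h₁)

lemma midQ_mem_Ioo {J : ℚ × ℚ} (hJ : J ∈ SDSet) : midQ J ∈ Set.Ioo 0 1 := by
  have := hJ.lt; have := hJ.nonneg; have := hJ.le_one
  constructor <;> unfold midQ <;> linarith

lemma injOn_midQ : Set.InjOn midQ SDSet := by
  rintro ⟨-, -⟩ ⟨m, k, -, rfl, rfl⟩ ⟨-, -⟩ ⟨m', k', -, rfl, rfl⟩ h
  have key : (2 * k + 1) * 2 ^ (m' + 1) = (2 * k' + 1) * 2 ^ (m + 1) := by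
    simp only [midQ] at h
    field_simp at h
    rw [pow_succ, pow_succ]
    have : ((2 * k + 1 : ℕ) : ℚ) * (2 ^ m' * 2) = (2 * k' + 1 : ℕ) * (2 ^ m * 2) := by
      push_cast; linear_combination 2 * h
    exact_mod_cast this
  obtain ⟨hm, rfl⟩ := odd_mul_two_pow_inj key
  obtain rfl : m' = m := by omega
  rfl

lemma dyadic_rep_unique {m m' k k' : ℕ} (hl : (k : ℚ) / 2 ^ m = k' / 2 ^ m')
    (hr : ((k : ℚ) + 1) / 2 ^ m = (k' + 1) / 2 ^ m') : m = m' ∧ k = k' := by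
  have hlen : ((2 : ℚ) ^ m)⁻¹ = (2 ^ m')⁻¹ := by
    rw [show ((2 : ℚ) ^ m)⁻¹ = (k + 1) / 2 ^ m - k / 2 ^ m by ring,
      show ((2 : ℚ) ^ m')⁻¹ = (k' + 1) / 2 ^ m' - k' / 2 ^ m' by ring, hl, hr]
  obtain rfl : m = m' := pow_right_injective₀ (by norm_num) (by norm_num) (inv_inj.mp hlen)
  exact ⟨rfl, by exact_mod_cast (div_left_inj' (by positivity)).mp hl⟩

def rightHalf (J : ℚ × ℚ) : ℚ × ℚ := (midQ J, J.2)

lemma rightHalf_dyadic (m k : ℕ) :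
    rightHalf ((k : ℚ) / 2 ^ m, ((k : ℚ) + 1) / 2 ^ m) =
      (((2 * k + 1 : ℕ) : ℚ) / 2 ^ (m + 1), (((2 * k + 1 : ℕ) : ℚ) + 1) / 2 ^ (m + 1)) := by
  simp only [rightHalf, midQ, Prod.mk.injEq]
  push_cast
  constructor <;> (rw [pow_succ]; field_simp; ring)

section rightHalf

variable {J : ℚ × ℚ}

lemma rightHalf_mem_SDSet (hJ : J ∈ SDSet) : rightHalf J ∈ SDSet := by
  obtain ⟨l, r⟩ := J
  obtain ⟨m, k, hk, rfl, rfl⟩ := hJ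
  rw [rightHalf_dyadic]
  exact ⟨m + 1, 2 * k + 1, by rw [pow_succ]; omega, rfl, rfl⟩

lemma isRightSD_rightHalf (hJ : J ∈ SDSet) : IsRightSD (rightHalf J).1 (rightHalf J).2 := by
  obtain ⟨l, r⟩ := J
  obtain ⟨m, k, hk, rfl, rfl⟩ := hJ
  rw [rightHalf_dyadic]
  exact Or.inr ⟨m + 1, 2 * k + 1, by omega, by rw [pow_succ]; omega, odd_two_mul_add_one k,
    rfl, rfl⟩

lemma not_isLeftSD_rightHalf (hJ : J ∈ SDSet) : ¬ IsLeftSD (rightHalf J).1 (rightHalf J).2 := by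
  obtain ⟨l, r⟩ := J
  obtain ⟨m, k, -, rfl, rfl⟩ := hJ
  rw [rightHalf_dyadic]
  rintro ⟨m', k', -, -, hk', hl', hr'⟩
  obtain ⟨-, rfl⟩ := dyadic_rep_unique hl' hr'
  exact Nat.not_even_two_mul_add_one k hk'

lemma rightHalf_ne_zero_one (hJ : J ∈ SDSet) : rightHalf J ≠ (0, 1) :=
  fun h => (midQ_mem_Ioo hJ).1.ne' (congrArg Prod.fst h)

lemma sdJoin_rightHalf_conjSD (hJ : J ∈ SDSet) :
    sdJoin (rightHalf J) (conjSD (rightHalf J)) = J := by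
  have := hJ.lt
  simp only [conjSD, if_neg (not_isLeftSD_rightHalf hJ), sdJoin]
  simp only [rightHalf, midQ]
  ext
  · rw [min_eq_right] <;> linarith
  · rw [max_eq_left]; linarith

lemma SignSpec.sign_rightHalf {s : ℚ × ℚ → ℤ} (hs : SignSpec s) (hJ : J ∈ SDSet) :
    s (rightHalf J) = - s J := by
  rw [(hs.2.2 _ (rightHalf_mem_SDSet hJ) (rightHalf_ne_zero_one hJ)).2 (isRightSD_rightHalf hJ),
    sdJoin_rightHalf_conjSD hJ]

end rightHalf

lemma exists_eq_rightHalf {A : ℚ × ℚ} (hA : IsRightSD A.1 A.2) (hA₀ : A ≠ (0, 1)) :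
    ∃ J ∈ SDSet, A = rightHalf J := by
  obtain ⟨h₀, h₁⟩ | ⟨_ | m, _, hm, hk, ⟨t, rfl⟩, hl, hr⟩ := hA
  · exact absurd (Prod.ext h₀ h₁) hA₀
  · omega
  refine ⟨((t : ℚ) / 2 ^ m, ((t : ℚ) + 1) / 2 ^ m), ⟨m, t, ?_, rfl, rfl⟩, ?_⟩
  · rw [pow_succ] at hk; omega
  · rw [rightHalf_dyadic, Prod.ext_iff]
    exact ⟨hl, hr⟩

namespace SDPartition

variable {n : ℕ} (I : SDPartition n)

lemma zero_one_mem_SRIn : ((0 : ℚ), (1 : ℚ)) ∈ SRIn I :=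
  ⟨⟨⟨0, Fin.last n, I.mono.lt_iff_lt.mp (by rw [I.first, I.last]; norm_num),
    by rw [I.first, I.last]⟩, isSD_zero_one⟩, Or.inl ⟨rfl, rfl⟩⟩

lemma finite_SIn : (SIn I).Finite :=
  (Set.finite_range fun ij : Fin (n + 1) × Fin (n + 1) => (I.pts ij.1, I.pts ij.2)).subset
    (by rintro A ⟨⟨i, j, -, rfl⟩, -⟩; exact ⟨(i, j), rfl⟩)

lemma exists_pts_eq_of_isSD {l r : ℚ} (hJ : IsSD l r) {j : Fin (n + 1)}
    (hlj : l < I.pts j) (hjr : I.pts j < r) : ∃ p, I.pts p = r := by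
  classical
  obtain ⟨p, hp, hp_max⟩ := (Finset.univ.filter fun i => I.pts i < r).exists_max_image I.pts
    ⟨0, by
      simp only [Finset.mem_filter, Finset.mem_univ, true_and, I.first]
      linarith [hJ.nonneg]⟩
  simp only [Finset.mem_filter, Finset.mem_univ, true_and] at hp hp_max
  obtain ⟨i, rfl⟩ : ∃ i : Fin n, i.castSucc = p := Fin.exists_castSucc_eq.mpr fun h => by
    rw [h, I.last] at hp; linarith [hJ.le_one]
  have hr_le : r ≤ I.pts i.succ := by
    by_contra! h
    linarith [hp_max i.succ h, I.mono (Fin.castSucc_lt_succ (i := i))]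
  obtain h | h := hr_le.eq_or_lt
  · exact ⟨i.succ, h.symm⟩
  · -- the part around `r` can neither lie in `[l, r]` nor contain it (no breakpoint inside)
    rcases (I.sd i).nested_of_overlap hJ hp (by linarith [hJ.lt]) with ⟨-, h'⟩ | ⟨h', -⟩
    · linarith
    · have h₁ := Fin.castSucc_lt_iff_succ_le.mp (I.mono.lt_iff_lt.mp (h'.trans_lt hlj))
      exact absurd (I.mono.lt_iff_lt.mp (hjr.trans h)) h₁.not_gt

lemma rightHalf_mem_SRIn {J : ℚ × ℚ} (hJ : J ∈ SDSet) {j : Fin (n + 1)}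
    (hj : midQ J = I.pts j) : rightHalf J ∈ SRIn I := by
  have hJ₁ : J.1 < I.pts j := by rw [← hj, midQ]; linarith [hJ.lt]
  have hJ₂ : I.pts j < J.2 := by rw [← hj, midQ]; linarith [hJ.lt]
  obtain ⟨p, hp⟩ := I.exists_pts_eq_of_isSD hJ hJ₁ hJ₂
  exact ⟨⟨⟨j, p, I.mono.lt_iff_lt.mp (hp ▸ hJ₂), by rw [rightHalf, hj, hp]⟩,
    rightHalf_mem_SDSet hJ⟩, isRightSD_rightHalf hJ⟩

end SDPartition

/-- the number of intervals of `S_R(I)` with sign `+1` equals one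
plus the number of breakpoints `a` of `I` with `0 < a < 1` whose sign is `-1`
(the sign of `a` being that of the standard dyadic interval with midpoint `a`). -/
theorem statement_18 {n : ℕ} (I : SDPartition n) (s : ℚ × ℚ → ℤ)
    (hs : SignSpec s) :
    ({A ∈ SRIn I | s A = 1}).ncard =
      ({q : ℚ | (∃ i : Fin (n + 1), I.pts i = q) ∧ q ≠ 0 ∧ q ≠ 1 ∧
          ∃ A ∈ SDSet, midQ A = q ∧ s A = -1}).ncard + 1 := by
  set P := {A ∈ SRIn I | s A = 1}
  have hP : (P \ {(0, 1)}).ncard + 1 = P.ncard :=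
    Set.ncard_sdiff_singleton_add_one ⟨I.zero_one_mem_SRIn, hs.2.1⟩
      (I.finite_SIn.subset fun A hA => hA.1.1)
  have hinj : Set.InjOn Prod.fst (P \ {(0, 1)}) := by
    rintro A ⟨⟨⟨-, hA⟩, -⟩, hA₀⟩ B ⟨⟨⟨-, hB⟩, -⟩, hB₀⟩ hAB
    obtain ⟨J, hJ, rfl⟩ := exists_eq_rightHalf hA hA₀
    obtain ⟨K, hK, rfl⟩ := exists_eq_rightHalf hB hB₀
    rw [injOn_midQ hJ hK hAB]
  have himage : Prod.fst '' (P \ {(0, 1)}) = {q : ℚ | (∃ i : Fin (n + 1), I.pts i = q) ∧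
      q ≠ 0 ∧ q ≠ 1 ∧ ∃ A ∈ SDSet, midQ A = q ∧ s A = -1} := by
    ext q
    constructor
    · rintro ⟨A, ⟨⟨⟨⟨⟨i, j, -, rfl⟩, -⟩, hA⟩, hsA⟩, hA₀⟩, rfl⟩
      obtain ⟨J, hJ, hJA⟩ := exists_eq_rightHalf hA hA₀
      obtain ⟨hq₀, hq₁⟩ := midQ_mem_Ioo hJ
      have hq : I.pts i = midQ J := congrArg Prod.fst hJA
      refine ⟨⟨i, rfl⟩, hq ▸ hq₀.ne', hq ▸ hq₁.ne, J, hJ, hq.symm, ?_⟩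
      rw [← neg_neg (s J), ← hs.sign_rightHalf hJ, ← hJA, hsA]
    · rintro ⟨⟨j, rfl⟩, -, -, J, hJ, hJj, hsJ⟩
      have hsign : s (rightHalf J) = 1 := by rw [hs.sign_rightHalf hJ, hsJ, neg_neg]
      exact ⟨rightHalf J, ⟨⟨I.rightHalf_mem_SRIn hJ hJj, hsign⟩, rightHalf_ne_zero_one hJ⟩, hJj⟩
  rw [← hP, ← himage, hinj.ncard_image]
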